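/- The Abel differential equation dy/dx = p(x)y² + q(x)y³ with p(x) = 40x⁴ - 30x² + 2 and q(x) = 75x⁹ - 150x⁷ + 88x⁵ - 10x³ - 3x has a center on [-1,1]: there exists ε > 0 such that for every initial value y₀ with |y₀| < ε, the solution y with y(-1) = y₀ is defined on all of [-1,1] and satisfies y(1) = y₀. -/

import Mathlib

open MeasureTheory Set

noncomputable def p (x : ℝ) : ℝ := 40*x^4 - 30*x^2 + 2
noncomputable def q (x : ℝ) : ℝ := 75*x^9 - 150*x^7 + 88*x^5 - 10*x^3 - 3*x

/-!
Cutting the field off outside a small interval `[-ρ, ρ]` makes it globally Lipschitz, so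
Picard–Lindelöf gives a solution on `[-1, 1]`; comparing it with the zero solution (Grönwall) shows
that it stays in `[-ρ, ρ]` when `|y(-1)|` is small, hence solves the original equation.

The curves `f₁ = 1 + α₁(x) y + α₂(x) y² = 0` and `f₂ = 1 + β₁(x) y + β₂(x) y² = 0` are invariant
for `y' = p y² + q y³`, with cofactors `K₁`, `K₂`, and the cofactor `p y + q y²` of `y = 0`
satisfies `2 (p y + q y²) + 3 K₁ = 4 K₂`. Hence `H = y² f₁³ / f₂⁴` is constant along solutions
on which `f₂ ≠ 0`, which is the case for all small solutions. The coefficients `α₁, α₂, β₁, β₂`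
vanish at `x = ±1`, so `H(±1, y) = y²` and every small solution satisfies `y(1)² = y(-1)²`.
A solution cannot change sign, since by uniqueness a solution with a zero vanishes identically;
so `y(1) = y(-1)`.
-/

open Metric Filter Topology
open scoped NNReal

theorem norm_le_mul_exp_of_lipschitzWith {E : Type*} [NormedAddCommGroup E] [NormedSpace ℝ E]
    {v : ℝ → E → E} {K : ℝ≥0} {γ : ℝ → E} {a b : ℝ} (hv : ∀ t ∈ Ico a b, LipschitzWith K (v t))
    (hv₀ : ∀ t ∈ Ico a b, v t 0 = 0) (hγ : ∀ t ∈ Icc a b, HasDerivAt γ (v t (γ t)) t) :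
    ∀ t ∈ Icc a b, ‖γ t‖ ≤ ‖γ a‖ * Real.exp (K * (t - a)) := by
  intro t ht
  simpa using dist_le_of_trajectories_ODE_of_mem (s := fun _ => univ) (g := fun _ => 0)
    (fun t ht => (hv t ht).lipschitzOnWith)
    (fun t ht => (hγ t ht).continuousAt.continuousWithinAt)
    (fun t ht => (hγ t (Ico_subset_Icc_self ht)).hasDerivWithinAt) (fun _ _ => trivial)
    continuousOn_const (fun t ht => by simpa [hv₀ t ht] using hasDerivWithinAt_const t _ (0 : E))
    (fun _ _ => trivial) (le_of_eq (dist_zero_right _)) t ht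

theorem exists_forall_mem_Icc_hasDerivWithinAt_of_lipschitzWith {E : Type*}
    [NormedAddCommGroup E] [NormedSpace ℝ E] [CompleteSpace E] {v : ℝ → E → E} {tmin tmax : ℝ}
    {K : ℝ≥0} {L : ℝ} (hlip : ∀ t ∈ Icc tmin tmax, LipschitzWith K (v t))
    (hcont : ∀ x, ContinuousOn (v · x) (Icc tmin tmax))
    (hbound : ∀ t ∈ Icc tmin tmax, ∀ x, ‖v t x‖ ≤ L) (t₀ : Icc tmin tmax) (x₀ : E) :
    ∃ γ : ℝ → E, γ t₀ = x₀ ∧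
      ∀ t ∈ Icc tmin tmax, HasDerivWithinAt γ (v t (γ t)) (Icc tmin tmax) t := by
  have hpl : IsPicardLindelof v t₀ x₀ (L.toNNReal * (tmax - tmin).toNNReal) 0 L.toNNReal K :=
    { lipschitzOnWith := fun t ht => (hlip t ht).lipschitzOnWith
      continuousOn := fun x _ => hcont x
      norm_le := fun t ht x _ => (hbound t ht x).trans (Real.le_coe_toNNReal L)
      mul_max_le := by
        obtain ⟨t₀, h₀, h₁⟩ := t₀
        simp only [NNReal.coe_mul, Real.coe_toNNReal', NNReal.coe_zero, sub_zero]
        exact mul_le_mul_of_nonneg_left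
          ((max_le (by linarith) (by linarith)).trans (le_max_left _ _)) (le_max_right _ _) }
  exact hpl.exists_eq_forall_mem_Icc_hasDerivWithinAt₀

lemma hasDerivAt_one_add_mul_add_mul_sq {c₁ c₂ y : ℝ → ℝ} {c₁' c₂' y' x : ℝ}
    (h₁ : HasDerivAt c₁ c₁' x) (h₂ : HasDerivAt c₂ c₂' x) (hy : HasDerivAt y y' x) :
    HasDerivAt (fun t => 1 + c₁ t * y t + c₂ t * y t ^ 2)
      (c₁' * y x + c₁ x * y' + (c₂' * y x ^ 2 + c₂ x * (2 * y x * y'))) x := by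
  refine (((h₁.mul hy).const_add 1).add (h₂.mul (hy.pow 2))).congr_deriv ?_
  simp only [Pi.pow_apply]
  push_cast
  ring

theorem hasDerivAt_pow_mul_pow_div_pow_eq_zero {u v w : ℝ → ℝ} {U V W x : ℝ} {l m n : ℕ}
    (hu : HasDerivAt u (U * u x) x) (hv : HasDerivAt v (V * v x) x)
    (hw : HasDerivAt w (W * w x) x) (hw₀ : w x ≠ 0) (h : l * U + m * V = n * W) :
    HasDerivAt (fun t => u t ^ l * v t ^ m / w t ^ n) 0 x := by
  have hpow (k : ℕ) (a A : ℝ) : k * a ^ (k - 1) * (A * a) = k * A * a ^ k := by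
    rcases k with _ | k
    · simp
    · rw [Nat.add_sub_cancel, pow_succ]; ring
  refine (((hu.pow l).mul (hv.pow m)).div (hw.pow n) (pow_ne_zero n hw₀)).congr_deriv ?_
  rw [hpow, hpow, hpow, div_eq_zero_iff]
  left
  simp only [Pi.pow_apply, Pi.mul_apply]
  linear_combination (u x ^ l * v x ^ m * w x ^ n) * h

noncomputable def abelField (f g : ℝ → ℝ) (t z : ℝ) : ℝ := f t * z ^ 2 + g t * z ^ 3

def IsAbelSolutionOn (f g y : ℝ → ℝ) (s : Set ℝ) : Prop :=
  ∀ t ∈ s, HasDerivAt y (abelField f g t (y t)) t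

noncomputable def truncatedAbelField (f g : ℝ → ℝ) {ρ : ℝ} (hρ : -ρ ≤ ρ) (t z : ℝ) : ℝ :=
  abelField f g t (projIcc (-ρ) ρ hρ z)

section AbelEquation

variable {f g y : ℝ → ℝ} {a b : ℝ}

@[simp] lemma abelField_zero (t : ℝ) : abelField f g t 0 = 0 := by simp [abelField]

lemma abelField_lipschitzOnWith {t M R : ℝ} (hf : |f t| ≤ M) (hg : |g t| ≤ M) :
    LipschitzOnWith (M * (2 * R + 3 * R ^ 2)).toNNReal (abelField f g t) (Icc (-R) R) := by
  refine LipschitzOnWith.of_dist_le' fun z hz w hw => ?_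
  obtain ⟨hz₁, hz₂⟩ := hz
  obtain ⟨hw₁, hw₂⟩ := hw
  have hzw : |z + w| ≤ 2 * R := abs_le.2 ⟨by linarith, by linarith⟩
  have hzw₂ : |z ^ 2 + z * w + w ^ 2| ≤ 3 * R ^ 2 :=
    abs_le.2 ⟨by nlinarith [sq_nonneg (z + w)], by nlinarith⟩
  have hM : 0 ≤ M := (abs_nonneg _).trans hf
  calc dist (abelField f g t z) (abelField f g t w)
      = |f t * (z + w) + g t * (z ^ 2 + z * w + w ^ 2)| * dist z w := by
        rw [Real.dist_eq, Real.dist_eq, ← abs_mul]; unfold abelField; ring_nf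
    _ ≤ (|f t| * |z + w| + |g t| * |z ^ 2 + z * w + w ^ 2|) * dist z w := by
        gcongr
        exact (abs_add_le _ _).trans_eq (by rw [abs_mul, abs_mul])
    _ ≤ (M * (2 * R) + M * (3 * R ^ 2)) * dist z w := by gcongr
    _ = M * (2 * R + 3 * R ^ 2) * dist z w := by ring

lemma exists_abs_le_of_continuousOn (hf : ContinuousOn f (Icc a b))
    (hg : ContinuousOn g (Icc a b)) : ∃ M, ∀ t ∈ Icc a b, |f t| ≤ M ∧ |g t| ≤ M := by
  obtain ⟨Mf, hMf⟩ := isCompact_Icc.exists_bound_of_continuousOn hf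
  obtain ⟨Mg, hMg⟩ := isCompact_Icc.exists_bound_of_continuousOn hg
  exact ⟨max Mf Mg, fun t ht => ⟨(hMf t ht).trans (le_max_left _ _),
    (hMg t ht).trans (le_max_right _ _)⟩⟩

lemma IsAbelSolutionOn.continuousOn {s : Set ℝ} (hy : IsAbelSolutionOn f g y s) :
    ContinuousOn y s :=
  fun t ht => (hy t ht).continuousAt.continuousWithinAt

lemma isAbelSolutionOn_zero (s : Set ℝ) : IsAbelSolutionOn f g 0 s :=
  fun t _ => by simp

section Truncation

variable {ρ : ℝ} (hρ : -ρ ≤ ρ)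

lemma truncatedAbelField_of_mem {t z : ℝ} (hz : z ∈ Icc (-ρ) ρ) :
    truncatedAbelField f g hρ t z = abelField f g t z := by
  rw [truncatedAbelField, projIcc_of_mem hρ hz]

lemma truncatedAbelField_zero (t : ℝ) : truncatedAbelField f g hρ t 0 = 0 := by
  rw [truncatedAbelField_of_mem hρ ⟨by linarith, by linarith⟩, abelField_zero]

lemma truncatedAbelField_lipschitzWith {t M : ℝ} (hf : |f t| ≤ M) (hg : |g t| ≤ M) :
    LipschitzWith (M * (2 * ρ + 3 * ρ ^ 2)).toNNReal (truncatedAbelField f g hρ t) := by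
  rw [← lipschitzOnWith_univ]
  have h := (abelField_lipschitzOnWith hf hg).comp
    ((LipschitzWith.subtype_val _).comp (LipschitzWith.projIcc hρ)).lipschitzOnWith (s := univ)
    (fun z _ => (projIcc (-ρ) ρ hρ z).2)
  rwa [mul_one, mul_one] at h

lemma abs_truncatedAbelField_le {t M : ℝ} (hf : |f t| ≤ M) (hg : |g t| ≤ M) (z : ℝ) :
    |truncatedAbelField f g hρ t z| ≤ M * (2 * ρ + 3 * ρ ^ 2) * ρ := by
  have hz := (projIcc (-ρ) ρ hρ z).2
  have hM : 0 ≤ M := (abs_nonneg _).trans hf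
  calc |truncatedAbelField f g hρ t z|
      = dist (abelField f g t (projIcc (-ρ) ρ hρ z)) (abelField f g t 0) := by
        rw [abelField_zero, Real.dist_0_eq_abs, truncatedAbelField]
    _ ≤ (M * (2 * ρ + 3 * ρ ^ 2)).toNNReal * dist (projIcc (-ρ) ρ hρ z : ℝ) 0 :=
        (abelField_lipschitzOnWith hf hg).dist_le_mul _ hz 0 ⟨by linarith, by linarith⟩
    _ ≤ M * (2 * ρ + 3 * ρ ^ 2) * ρ := by
        have hK : 0 ≤ M * (2 * ρ + 3 * ρ ^ 2) := mul_nonneg hM (by nlinarith)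
        rw [Real.dist_0_eq_abs, Real.coe_toNNReal _ hK]
        exact mul_le_mul_of_nonneg_left (abs_le.2 hz) hK

end Truncation

theorem exists_isAbelSolutionOn_abs_le (hf : Continuous f) (hg : Continuous g) (hab : a ≤ b)
    {ρ : ℝ} (hρ : 0 < ρ) : ∃ ε > 0, ∀ y₀, |y₀| < ε → ∃ y, y a = y₀ ∧
      IsAbelSolutionOn f g y (Icc a b) ∧ ∀ t ∈ Icc a b, |y t| ≤ ρ := by
  have hρ' : -ρ ≤ ρ := by linarith
  obtain ⟨M, hM⟩ := exists_abs_le_of_continuousOn (a := a - 1) (b := b + 1)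
    hf.continuousOn hg.continuousOn
  set K := (M * (2 * ρ + 3 * ρ ^ 2)).toNNReal
  have hK := fun t (ht : t ∈ Icc (a - 1) (b + 1)) =>
    truncatedAbelField_lipschitzWith hρ' (hM t ht).1 (hM t ht).2
  refine ⟨ρ * Real.exp (-(K * (b - a))), by positivity, fun y₀ hy₀ => ?_⟩
  -- the interval is enlarged so that the solution is differentiable at `a` and `b`
  obtain ⟨y, hy₀, hy⟩ := exists_forall_mem_Icc_hasDerivWithinAt_of_lipschitzWith hK
    (fun z => by unfold truncatedAbelField abelField; fun_prop)
    (fun t ht => abs_truncatedAbelField_le hρ' (hM t ht).1 (hM t ht).2)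
    ⟨a, by linarith, by linarith⟩ y₀
  replace hy₀ : y a = y₀ := hy₀
  have hy' : ∀ t ∈ Icc a b, HasDerivAt y (truncatedAbelField f g hρ' t (y t)) t := fun t ht =>
    (hy t ⟨by linarith [ht.1], by linarith [ht.2]⟩).hasDerivAt
      (Icc_mem_nhds (by linarith [ht.1]) (by linarith [ht.2]))
  have hsmall : ∀ t ∈ Icc a b, |y t| ≤ ρ := fun t ht => calc
    |y t| ≤ |y₀| * Real.exp (K * (t - a)) := by
      simpa only [Real.norm_eq_abs, hy₀] using norm_le_mul_exp_of_lipschitzWith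
        (fun t ht => hK t ⟨by linarith [ht.1], by linarith [ht.2]⟩)
        (fun t _ => truncatedAbelField_zero hρ' t) hy' t ht
    _ ≤ ρ * Real.exp (-(K * (b - a))) * Real.exp (K * (b - a)) := by
      gcongr; linarith [ht.2]
    _ = ρ := by rw [mul_assoc, ← Real.exp_add, neg_add_cancel, Real.exp_zero, mul_one]
  refine ⟨y, hy₀, fun t ht => ?_, hsmall⟩
  simpa [truncatedAbelField_of_mem hρ' (abs_le.1 (hsmall t ht))] using hy' t ht

theorem IsAbelSolutionOn.eqOn (hf : ContinuousOn f (Icc a b)) (hg : ContinuousOn g (Icc a b))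
    {y₁ y₂ : ℝ → ℝ} (h₁ : IsAbelSolutionOn f g y₁ (Icc a b))
    (h₂ : IsAbelSolutionOn f g y₂ (Icc a b)) {c : ℝ} (hc : c ∈ Icc a b) (h : y₁ c = y₂ c) :
    EqOn y₁ y₂ (Icc a b) := by
  obtain ⟨M, hM⟩ := exists_abs_le_of_continuousOn hf hg
  obtain ⟨R, hR⟩ := exists_abs_le_of_continuousOn h₁.continuousOn h₂.continuousOn
  have hv := fun t (ht : t ∈ Icc a b) =>
    abelField_lipschitzOnWith (R := R) (hM t ht).1 (hM t ht).2
  have hR₁ := fun t (ht : t ∈ Icc a b) => abs_le.1 (hR t ht).1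
  have hR₂ := fun t (ht : t ∈ Icc a b) => abs_le.1 (hR t ht).2
  have hl : Ioc a c ⊆ Icc a b := fun t ht => ⟨ht.1.le, ht.2.trans hc.2⟩
  have hr : Ico c b ⊆ Icc a b := fun t ht => ⟨hc.1.trans ht.1, ht.2.le⟩
  rw [← Icc_union_Icc_eq_Icc hc.1 hc.2]
  refine EqOn.union ?_ ?_
  · exact ODE_solution_unique_of_mem_Icc_left (s := fun _ => Icc (-R) R)
      (fun t ht => hv t (hl ht)) (h₁.continuousOn.mono (Icc_subset_Icc_right hc.2))
      (fun t ht => (h₁ t (hl ht)).hasDerivWithinAt) (fun t ht => hR₁ t (hl ht))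
      (h₂.continuousOn.mono (Icc_subset_Icc_right hc.2))
      (fun t ht => (h₂ t (hl ht)).hasDerivWithinAt) (fun t ht => hR₂ t (hl ht)) h
  · exact ODE_solution_unique_of_mem_Icc_right (s := fun _ => Icc (-R) R)
      (fun t ht => hv t (hr ht)) (h₁.continuousOn.mono (Icc_subset_Icc_left hc.1))
      (fun t ht => (h₁ t (hr ht)).hasDerivWithinAt) (fun t ht => hR₁ t (hr ht))
      (h₂.continuousOn.mono (Icc_subset_Icc_left hc.1))
      (fun t ht => (h₂ t (hr ht)).hasDerivWithinAt) (fun t ht => hR₂ t (hr ht)) h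

theorem IsAbelSolutionOn.eq_of_sq_eq (hf : ContinuousOn f (Icc a b))
    (hg : ContinuousOn g (Icc a b)) (hy : IsAbelSolutionOn f g y (Icc a b)) (hab : a ≤ b)
    (h : y b ^ 2 = y a ^ 2) : y b = y a := by
  rcases sq_eq_sq_iff_eq_or_eq_neg.1 h with h | h
  · exact h
  obtain ⟨c, hc, hc₀⟩ : ∃ c ∈ Icc a b, y c = 0 := by
    have h₀ : (0 : ℝ) ∈ uIcc (y a) (y b) := by
      rw [h, mem_uIcc]
      rcases le_total (y a) 0 with h' | h' <;> [left; right] <;> constructor <;> linarith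
    rw [← uIcc_of_le hab]
    exact intermediate_value_uIcc (hy.continuousOn.mono (uIcc_of_le hab).subset) h₀
  have hy₀ := hy.eqOn hf hg (isAbelSolutionOn_zero _) hc hc₀
  rw [hy₀ ⟨le_rfl, hab⟩, hy₀ ⟨hab, le_rfl⟩]
  rfl

end AbelEquation

lemma continuous_p : Continuous p := by unfold p; fun_prop

lemma continuous_q : Continuous q := by unfold q; fun_prop

namespace AbelCenter

noncomputable def α₁ (x : ℝ) : ℝ := 4*x - 12*x^3 + 8*x^5
noncomputable def α₂ (x : ℝ) : ℝ := 1/2 + x^2 - 17*x^4 + 44*x^6 - (87/2)*x^8 + 15*x^10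
noncomputable def β₁ (x : ℝ) : ℝ := 4*x - 14*x^3 + 10*x^5
noncomputable def β₂ (x : ℝ) : ℝ := 2/3 + x^2 - 24*x^4 + (202/3)*x^6 - 70*x^8 + 25*x^10

noncomputable def f₁ (x y : ℝ) : ℝ := 1 + α₁ x * y + α₂ x * y ^ 2
noncomputable def f₂ (x y : ℝ) : ℝ := 1 + β₁ x * y + β₂ x * y ^ 2

noncomputable def K₁ (x y : ℝ) : ℝ := (4 - 36*x^2 + 40*x^4) * y + 2 * q x * y ^ 2
noncomputable def K₂ (x y : ℝ) : ℝ := (4 - 42*x^2 + 50*x^4) * y + 2 * q x * y ^ 2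

noncomputable def H (x y : ℝ) : ℝ := y ^ 2 * f₁ x y ^ 3 / f₂ x y ^ 4

lemma hasDerivAt_α₁ (x : ℝ) : HasDerivAt α₁ (4 - 36*x^2 + 40*x^4) x := by
  have h := (((hasDerivAt_id x).const_mul (4:ℝ)).sub ((hasDerivAt_pow 3 x).const_mul 12)).add
    ((hasDerivAt_pow 5 x).const_mul 8)
  refine h.congr_deriv ?_
  push_cast; ring

lemma hasDerivAt_α₂ (x : ℝ) :
    HasDerivAt α₂ (2*x - 68*x^3 + 264*x^5 - 348*x^7 + 150*x^9) x := by
  have h := (((((hasDerivAt_const x (1/2:ℝ)).add (hasDerivAt_pow 2 x)).sub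
    ((hasDerivAt_pow 4 x).const_mul 17)).add ((hasDerivAt_pow 6 x).const_mul 44)).sub
    ((hasDerivAt_pow 8 x).const_mul (87/2))).add ((hasDerivAt_pow 10 x).const_mul 15)
  refine h.congr_deriv ?_
  push_cast; ring

lemma hasDerivAt_β₁ (x : ℝ) : HasDerivAt β₁ (4 - 42*x^2 + 50*x^4) x := by
  have h := (((hasDerivAt_id x).const_mul (4:ℝ)).sub ((hasDerivAt_pow 3 x).const_mul 14)).add
    ((hasDerivAt_pow 5 x).const_mul 10)
  refine h.congr_deriv ?_
  push_cast; ring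

lemma hasDerivAt_β₂ (x : ℝ) :
    HasDerivAt β₂ (2*x - 96*x^3 + 404*x^5 - 560*x^7 + 250*x^9) x := by
  have h := (((((hasDerivAt_const x (2/3:ℝ)).add (hasDerivAt_pow 2 x)).sub
    ((hasDerivAt_pow 4 x).const_mul 24)).add ((hasDerivAt_pow 6 x).const_mul (202/3))).sub
    ((hasDerivAt_pow 8 x).const_mul 70)).add ((hasDerivAt_pow 10 x).const_mul 25)
  refine h.congr_deriv ?_
  push_cast; ring

variable {y : ℝ → ℝ} {x : ℝ}

lemma hasDerivAt_f₁_comp (hy : HasDerivAt y (abelField p q x (y x)) x) :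
    HasDerivAt (fun t => f₁ t (y t)) (K₁ x (y x) * f₁ x (y x)) x := by
  refine (hasDerivAt_one_add_mul_add_mul_sq (hasDerivAt_α₁ x) (hasDerivAt_α₂ x) hy).congr_deriv ?_
  unfold abelField K₁ f₁ p q α₁ α₂
  ring

lemma hasDerivAt_f₂_comp (hy : HasDerivAt y (abelField p q x (y x)) x) :
    HasDerivAt (fun t => f₂ t (y t)) (K₂ x (y x) * f₂ x (y x)) x := by
  refine (hasDerivAt_one_add_mul_add_mul_sq (hasDerivAt_β₁ x) (hasDerivAt_β₂ x) hy).congr_deriv ?_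
  unfold abelField K₂ f₂ p q β₁ β₂
  ring

theorem hasDerivAt_H_comp (hy : HasDerivAt y (abelField p q x (y x)) x)
    (h : f₂ x (y x) ≠ 0) : HasDerivAt (fun t => H t (y t)) 0 x := by
  refine hasDerivAt_pow_mul_pow_div_pow_eq_zero
    (hy.congr_deriv (by unfold abelField; ring : _ = (p x * y x + q x * y x ^ 2) * y x))
    (hasDerivAt_f₁_comp hy) (hasDerivAt_f₂_comp hy) h ?_
  unfold K₁ K₂ p
  push_cast
  ring

lemma H_one (y : ℝ) : H 1 y = y ^ 2 := by norm_num [H, f₁, f₂, α₁, α₂, β₁, β₂]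

lemma H_neg_one (y : ℝ) : H (-1) y = y ^ 2 := by norm_num [H, f₁, f₂, α₁, α₂, β₁, β₂]

lemma eventually_f₂_ne_zero : ∀ᶠ y in 𝓝 (0 : ℝ), ∀ x ∈ Icc (-1 : ℝ) 1, f₂ x y ≠ 0 :=
  isCompact_Icc.eventually_forall_of_forall_eventually fun x _ =>
    (show Continuous fun z : ℝ × ℝ => f₂ z.2 z.1 by unfold f₂ β₁ β₂; fun_prop).continuousAt
      |>.eventually_ne (by simp [f₂])

theorem apply_one_eq_apply_neg_one (hy : IsAbelSolutionOn p q y (Icc (-1) 1))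
    (hf₂ : ∀ x ∈ Icc (-1 : ℝ) 1, f₂ x (y x) ≠ 0) : y 1 = y (-1) := by
  have hH : ∀ x ∈ Icc (-1 : ℝ) 1, HasDerivAt (fun t => H t (y t)) 0 x :=
    fun x hx => hasDerivAt_H_comp (hy x hx) (hf₂ x hx)
  have hconst := constant_of_has_deriv_right_zero
    (fun x hx => (hH x hx).continuousAt.continuousWithinAt)
    (fun x hx => (hH x (Ico_subset_Icc_self hx)).hasDerivWithinAt) 1 ⟨by norm_num, le_rfl⟩
  refine hy.eq_of_sq_eq continuous_p.continuousOn continuous_q.continuousOn (by norm_num) ?_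
  simpa only [H_one, H_neg_one] using hconst

end AbelCenter

theorem abel_equation_has_center :
    ∃ ε > (0:ℝ), ∀ y₀ : ℝ, |y₀| < ε →
      (∃ y : ℝ → ℝ, y (-1) = y₀ ∧
        (∀ x ∈ Icc (-1:ℝ) 1, HasDerivAt y (p x * (y x)^2 + q x * (y x)^3) x) ∧
        y 1 = y₀) ∧
      (∀ y : ℝ → ℝ, y (-1) = y₀ →
        (∀ x ∈ Icc (-1:ℝ) 1, HasDerivAt y (p x * (y x)^2 + q x * (y x)^3) x) →
        y 1 = y₀) := by
  obtain ⟨ρ, hρ, hf₂⟩ := nhds_basis_closedBall.eventually_iff.1 AbelCenter.eventually_f₂_ne_zero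
  obtain ⟨ε, hε, hsmall⟩ := exists_isAbelSolutionOn_abs_le continuous_p continuous_q
    (by norm_num : (-1 : ℝ) ≤ 1) hρ
  refine ⟨ε, hε, fun y₀ hy₀ => ?_⟩
  obtain ⟨Y, hY₀, hY, hYρ⟩ := hsmall y₀ hy₀
  have hY₁ : Y 1 = y₀ := hY₀ ▸ AbelCenter.apply_one_eq_apply_neg_one hY
    fun x hx => hf₂ (mem_closedBall_zero_iff.2 (hYρ x hx)) x hx
  refine ⟨⟨Y, hY₀, hY, hY₁⟩, fun y hy₀ hy => ?_⟩
  rw [← hY₁]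
  exact IsAbelSolutionOn.eqOn (y₁ := y) continuous_p.continuousOn continuous_q.continuousOn hy hY
    ⟨le_rfl, by norm_num⟩ (hy₀.trans hY₀.symm) ⟨by norm_num, le_rfl⟩
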